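/- A semigroup S is completely inverse if and only if S is an inverse semigroup and S is H-orthodox. -/
import Mathlib


variable {S : Type*} [Semigroup S]

/-- Green's preorder `≤_L`: `a ∈ S¹ b`. -/
def leL (a b : S) : Prop := a = b ∨ ∃ x : S, a = x * b
/-- Green's preorder `≤_R`: `a ∈ b S¹`. -/
def leR (a b : S) : Prop := a = b ∨ ∃ x : S, a = b * x
/-- Green's preorder `≤_H`. -/
def leH (a b : S) : Prop := leL a b ∧ leR a b
/-- Green's relation `L`. -/
def grL (a b : S) : Prop := leL a b ∧ leL b a
/-- Green's relation `R`. -/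
def grR (a b : S) : Prop := leR a b ∧ leR b a
/-- Green's relation `H`. -/
def grH (a b : S) : Prop := leH a b ∧ leH b a
/-- `x` is the group inverse of `a`. -/
def IsGrpInv (a x : S) : Prop := a * x = x * a ∧ a * x * a = a ∧ x * a * x = x
/-- `a` is group invertible. -/
def GrpInvertible (a : S) : Prop := ∃ x : S, IsGrpInv a x
/-- `x ∈ V(a)[H]`: inverse of `a` modulo `H`. -/
def VH (a x : S) : Prop := grH (a * x * a) a ∧ grH (x * a * x) x
/-- `x ∈ A(a)[H]`: associate of `a` modulo `H`. -/
def AH (a x : S) : Prop := grH (a * x * a) a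
/-- `x ∈ V(a)`: reflexive inverse of `a`. -/
def refInv (a x : S) : Prop := a * x * a = a ∧ x * a * x = x
/-- The `H`-class of `a`. -/
def Hclass (a : S) : Set S := {b : S | grH b a}

set_option linter.unusedSectionVars false
set_option maxHeartbeats 1000000

section CIProof

lemma idem_grp {e : S} (he : e*e = e) : GrpInvertible e :=
  ⟨e, rfl, by rw [he, he], by rw [he, he]⟩

lemma make_inv (hreg : ∀ a : S, ∃ x : S, a = a * x * a) :
    ∃ i : S → S, (∀ a, a * i a * a = a) ∧ (∀ a, i a * a * i a = i a) := by
  have h : ∀ a : S, ∃ x : S, a * x * a = a ∧ x * a * x = x := by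
    intro a; obtain ⟨x, hx⟩ := hreg a
    have hx_t : ∀ t : S, a*(x*(a*t)) = a*t := fun t => by
      rw [← mul_assoc, ← mul_assoc, ← hx]
    have hx' : a * (x * a) = a := by simpa only [mul_assoc] using hx.symm
    refine ⟨x*a*x, ?_, ?_⟩
    · simp only [mul_assoc]
      rw [hx_t, hx']
    · simp only [mul_assoc]
      rw [hx_t, hx_t]
  exact ⟨fun a => Classical.choose (h a), fun a => (Classical.choose_spec (h a)).1,
    fun a => (Classical.choose_spec (h a)).2⟩

lemma hcom_idem_mul
    (hcom : ∀ a b : S, GrpInvertible a → GrpInvertible b → grH (a*b) (b*a))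
    {e f : S} (he : e*e = e) (hf : f*f = f) : (e*f)*(e*f) = e*f := by
  have h := hcom e f (idem_grp he) (idem_grp hf)
  have s2 : (e*f)*e = e*f := by
    rcases h.1.1 with h' | ⟨t, h'⟩
    · rw [h', mul_assoc, he]
    · rw [h', mul_assoc, mul_assoc, he]
  rw [← mul_assoc, s2, mul_assoc, hf]

lemma hcom_idem_comm
    (hcom : ∀ a b : S, GrpInvertible a → GrpInvertible b → grH (a*b) (b*a))
    {e f : S} (he : e*e = e) (hf : f*f = f) : e*f = f*e := by
  have hef := hcom_idem_mul hcom he hf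
  have hfe := hcom_idem_mul hcom hf he
  have h := hcom e f (idem_grp he) (idem_grp hf)
  have m2 : (f*e)*(e*f) = e*f := by
    rcases h.1.2 with h' | ⟨t, h'⟩
    · rw [h']; exact hfe
    · rw [h', ← mul_assoc, hfe]
  have m3 : (f*e)*(e*f) = f*e := by
    rcases h.2.1 with h' | ⟨t, h'⟩
    · rw [h']; exact hef
    · rw [h', mul_assoc, hef]
  exact m2.symm.trans m3

lemma uniq_of_comm (hc : ∀ e f : S, e*e = e → f*f = f → e*f = f*e) :
    ∀ a x y : S, refInv a x → refInv a y → x = y := by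
  rintro a x y ⟨hx1, hx2⟩ ⟨hy1, hy2⟩
  have iax : (a*x)*(a*x) = a*x := by rw [← mul_assoc, hx1]
  have iay : (a*y)*(a*y) = a*y := by rw [← mul_assoc, hy1]
  have ixa : (x*a)*(x*a) = x*a := by rw [← mul_assoc, hx2]
  have iya : (y*a)*(y*a) = y*a := by rw [← mul_assoc, hy2]
  have comm1 := hc _ _ iax iay
  have comm2 := hc _ _ ixa iya
  have X : x = x*(a*y) := by
    calc x = x*a*x := hx2.symm
      _ = x*(a*y*a)*x := by rw [hy1]
      _ = x*((a*y)*(a*x)) := by simp only [mul_assoc]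
      _ = x*((a*x)*(a*y)) := by rw [← comm1]
      _ = (x*a*x)*(a*y) := by simp only [mul_assoc]
      _ = x*(a*y) := by rw [hx2]
  have Y : y = x*a*y := by
    calc y = y*a*y := hy2.symm
      _ = y*(a*x*a)*y := by rw [hx1]
      _ = ((y*a)*(x*a))*y := by simp only [mul_assoc]
      _ = ((x*a)*(y*a))*y := by rw [comm2]
      _ = x*a*(y*a*y) := by simp only [mul_assoc]
      _ = x*a*y := by rw [hy2]
  exact X.trans (by simpa only [mul_assoc] using Y.symm)

end CIProof

section Toolkit

lemma mul_rule {p q r : S} (h : p * q = r) (t : S) : p * (q * t) = r * t := by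
  rw [← mul_assoc, h]

lemma swap_rule {x y : S} (h : x * y = y * x) (t : S) : x * (y * t) = y * (x * t) := by
  rw [← mul_assoc, h, mul_assoc]

lemma swap4 {x y u v : S} (h : (x*y)*(u*v) = (u*v)*(x*y)) (t : S) :
    x*(y*(u*(v*t))) = u*(v*(x*(y*t))) := by
  have := swap_rule h t
  simp only [mul_assoc] at this
  exact this

variable (i : S → S)
variable (h1 : ∀ a : S, a * i a * a = a) (h2 : ∀ a : S, i a * a * i a = i a)
include h1 h2

lemma r1 (a t : S) : a * (i a * (a * t)) = a * t := by
  rw [← mul_assoc, ← mul_assoc, h1]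

lemma r2 (a t : S) : i a * (a * (i a * t)) = i a * t := by
  rw [← mul_assoc, ← mul_assoc, h2]

lemma e1 (a : S) : a * (i a * a) = a := by rw [← mul_assoc, h1]

lemma e2 (a : S) : i a * (a * i a) = i a := by rw [← mul_assoc, h2]

-- idempotents
lemma lidem (a : S) : (i a * a) * (i a * a) = i a * a := by
  rw [mul_assoc, e1 i h1 h2]

lemma ridem (a : S) : (a * i a) * (a * i a) = a * i a := by
  rw [mul_assoc, e2 i h1 h2]

variable (hu : ∀ a x y : S, refInv a x → refInv a y → x = y)
include hu

lemma ci_inv_unique {a x : S} (hx : refInv a x) : x = i a :=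
  hu a x (i a) hx ⟨h1 a, h2 a⟩

lemma ci_inv_inv (a : S) : i (i a) = a :=
  (ci_inv_unique i h1 h2 hu ⟨h2 a, h1 a⟩).symm

lemma ci_inv_idem {e : S} (he : e * e = e) : i e = e :=
  (ci_inv_unique i h1 h2 hu ⟨by rw [he, he], by rw [he, he]⟩).symm

lemma idem_mul_idem {e f : S} (he : e*e = e) (hf : f*f = f) :
    (e*f)*(e*f) = e*f := by
  have part1 : (e*f) * (f * i (e*f) * e) * (e*f) = e*f := by
    simp only [mul_assoc]
    rw [mul_rule hf, mul_rule he, ← mul_assoc, e1 i h1 h2]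
  have part2 : (f * i (e*f) * e) * (e*f) * (f * i (e*f) * e) = f * i (e*f) * e := by
    simp only [mul_assoc]
    rw [mul_rule he, mul_rule hf,
      show i (e*f)*(e*(f*(i (e*f)*e))) = i (e*f)*e from by
        rw [← mul_assoc e, ← mul_assoc, ← mul_assoc, h2]]
  have hge : f * i (e*f) * e = i (e*f) := ci_inv_unique i h1 h2 hu ⟨part1, part2⟩
  have gg : i (e*f) * i (e*f) = i (e*f) := by
    conv_lhs => rw [← hge]
    simp only [mul_assoc]
    rw [show i (e*f)*(e*(f*(i (e*f)*e))) = i (e*f)*e from by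
        rw [← mul_assoc e, ← mul_assoc, ← mul_assoc, h2]]
    simpa only [mul_assoc] using hge
  have hefg : e*f = i (e*f) :=
    hu (i (e*f)) (e*f) (i (e*f)) ⟨h2 (e*f), h1 (e*f)⟩ ⟨by rw [gg, gg], by rw [gg, gg]⟩
  rw [hefg, gg]

lemma idem_comm {e f : S} (he : e*e = e) (hf : f*f = f) : e*f = f*e := by
  have hef := idem_mul_idem i h1 h2 hu he hf
  have hfe := idem_mul_idem i h1 h2 hu hf he
  have r1' : refInv (e*f) (f*e) := by
    constructor
    · simp only [mul_assoc]
      rw [mul_rule hf, mul_rule he]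
      simpa only [mul_assoc] using hef
    · simp only [mul_assoc]
      rw [mul_rule he, mul_rule hf]
      simpa only [mul_assoc] using hfe
  have r2' : refInv (e*f) (e*f) := ⟨by rw [hef, hef], by rw [hef, hef]⟩
  exact (hu (e*f) (f*e) (e*f) r1' r2').symm

lemma inv_mul (a b : S) : i (a*b) = i b * i a := by
  have hcomm : (b*i b)*(i a*a) = (i a*a)*(b*i b) :=
    idem_comm i h1 h2 hu (ridem i h1 h2 b) (lidem i h1 h2 a)
  have p1 : (a*b)*(i b*i a)*(a*b) = a*b := by
    simp only [mul_assoc]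
    rw [swap4 hcomm, r1 i h1 h2, e1 i h1 h2]
  have p2 : (i b*i a)*(a*b)*(i b*i a) = i b*i a := by
    simp only [mul_assoc]
    rw [swap4 hcomm.symm, r2 i h1 h2, e2 i h1 h2]
  exact (ci_inv_unique i h1 h2 hu ⟨p1, p2⟩).symm

lemma leL_absorb {c d : S} (h : leL c d) : c * (i d * d) = c := by
  rcases h with rfl | ⟨w, rfl⟩
  · exact e1 i h1 h2 c
  · rw [mul_assoc, e1 i h1 h2]

lemma leR_absorb {c d : S} (h : leR c d) : (d * i d) * c = c := by
  rcases h with rfl | ⟨w, rfl⟩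
  · exact h1 c
  · exact mul_rule (h1 d) w

lemma L_eq {c d : S} (hcd : leL c d) (hdc : leL d c) : i c * c = i d * d := by
  have hc := leL_absorb i h1 h2 hu hcd
  have hd := leL_absorb i h1 h2 hu hdc
  have e₁ : (i c * c) * (i d * d) = i c * c := by rw [mul_assoc, hc]
  have e₂ : (i d * d) * (i c * c) = i d * d := by rw [mul_assoc, hd]
  have comm := idem_comm i h1 h2 hu (lidem i h1 h2 c) (lidem i h1 h2 d)
  calc i c * c = (i c * c) * (i d * d) := e₁.symm
    _ = (i d * d) * (i c * c) := comm
    _ = i d * d := e₂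

lemma R_eq {c d : S} (hcd : leR c d) (hdc : leR d c) : c * i c = d * i d := by
  have hc := leR_absorb i h1 h2 hu hcd
  have hd := leR_absorb i h1 h2 hu hdc
  have e₁ : (d * i d) * (c * i c) = c * i c := by rw [← mul_assoc, hc]
  have e₂ : (c * i c) * (d * i d) = d * i d := by rw [← mul_assoc, hd]
  have comm := idem_comm i h1 h2 hu (ridem i h1 h2 c) (ridem i h1 h2 d)
  calc c * i c = (d * i d) * (c * i c) := e₁.symm
    _ = (c * i c) * (d * i d) := comm.symm
    _ = d * i d := e₂

lemma grH_of {c d : S} (hL : i c * c = i d * d) (hR : c * i c = d * i d) :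
    grH c d := by
  refine ⟨⟨Or.inr ⟨c * i d, ?_⟩, Or.inr ⟨i d * c, ?_⟩⟩,
    ⟨Or.inr ⟨d * i c, ?_⟩, Or.inr ⟨i c * d, ?_⟩⟩⟩
  · exact (by rw [mul_assoc, ← hL, e1 i h1 h2] : (c * i d) * d = c).symm
  · exact (by rw [← mul_assoc, ← hR, h1] : d * (i d * c) = c).symm
  · exact (by rw [mul_assoc, hL, e1 i h1 h2] : (d * i c) * c = d).symm
  · exact (by rw [← mul_assoc, hR, h1] : c * (i c * d) = d).symm

omit h1 h2 hu in
lemma grH_refl (a : S) : grH a a :=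
  ⟨⟨Or.inl rfl, Or.inl rfl⟩, ⟨Or.inl rfl, Or.inl rfl⟩⟩

omit h1 h2 hu in
lemma grH_symm {a b : S} (h : grH a b) : grH b a := ⟨h.2, h.1⟩

omit h1 h2 hu in
lemma leL_trans {a b c : S} (hab : leL a b) (hbc : leL b c) : leL a c := by
  rcases hab with rfl | ⟨x, rfl⟩
  · exact hbc
  · rcases hbc with rfl | ⟨y, rfl⟩
    · exact Or.inr ⟨x, rfl⟩
    · exact Or.inr ⟨x * y, by rw [mul_assoc]⟩

omit h1 h2 hu in
lemma leR_trans {a b c : S} (hab : leR a b) (hbc : leR b c) : leR a c := by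
  rcases hab with rfl | ⟨x, rfl⟩
  · exact hbc
  · rcases hbc with rfl | ⟨y, rfl⟩
    · exact Or.inr ⟨x, rfl⟩
    · exact Or.inr ⟨y * x, by rw [mul_assoc]⟩

omit h1 h2 hu in
lemma grH_trans {a b c : S} (hab : grH a b) (hbc : grH b c) : grH a c :=
  ⟨⟨leL_trans hab.1.1 hbc.1.1, leR_trans hab.1.2 hbc.1.2⟩,
   ⟨leL_trans hbc.2.1 hab.2.1, leR_trans hbc.2.2 hab.2.2⟩⟩

lemma grH_L {c d : S} (h : grH c d) : i c * c = i d * d :=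
  L_eq i h1 h2 hu h.1.1 h.2.1

lemma grH_R {c d : S} (h : grH c d) : c * i c = d * i d :=
  R_eq i h1 h2 hu h.1.2 h.2.2

lemma sq_comm {c : S} (h : grH (c*c) c) : c * i c = i c * c := by
  have hL : i (c*c) * (c*c) = i c * c := grH_L i h1 h2 hu h
  have hR : (c*c) * i (c*c) = c * i c := grH_R i h1 h2 hu h
  rw [inv_mul i h1 h2 hu] at hL hR
  have hcomm := idem_comm i h1 h2 hu (lidem i h1 h2 c) (ridem i h1 h2 c)
  -- hcomm : (i c*c)*(c*i c) = (c*i c)*(i c*c)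
  have E1'' : i c * ((i c * c) * c) = i c * c := by simpa only [mul_assoc] using hL
  have E2'' : c * ((c * i c) * i c) = c * i c := by simpa only [mul_assoc] using hR
  have s2 : (i c * c) * c = c := by
    have t1 : c * (i c * ((i c * c) * c)) = c * (i c * c) := by rw [E1'']
    have t2 : c * (i c * ((i c * c) * c)) = ((c * i c) * (i c * c)) * c := by
      simp only [mul_assoc]
    have t4 : ((i c * c) * (c * i c)) * c = (i c * c) * c := by
      rw [mul_assoc, h1]
    calc (i c * c) * c = ((i c * c) * (c * i c)) * c := t4.symm
      _ = ((c * i c) * (i c * c)) * c := by rw [hcomm]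
      _ = c * (i c * ((i c * c) * c)) := t2.symm
      _ = c * (i c * c) := t1
      _ = c := e1 i h1 h2 c
  have s4 : (c * i c) * i c = i c := by
    have t1 : i c * (c * ((c * i c) * i c)) = i c * (c * i c) := by rw [E2'']
    have t2 : i c * (c * ((c * i c) * i c)) = ((i c * c) * (c * i c)) * i c := by
      simp only [mul_assoc]
    have t4 : ((c * i c) * (i c * c)) * i c = (c * i c) * i c := by
      rw [mul_assoc, h2]
    calc (c * i c) * i c = ((c * i c) * (i c * c)) * i c := t4.symm
      _ = ((i c * c) * (c * i c)) * i c := by rw [← hcomm]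
      _ = i c * (c * ((c * i c) * i c)) := t2.symm
      _ = i c * (c * i c) := t1
      _ = i c := e2 i h1 h2 c
  have f1 : (i c * c) * (c * i c) = c * i c := by rw [← mul_assoc, s2]
  have f2 : (c * i c) * (i c * c) = i c * c := by rw [← mul_assoc, s4]
  calc c * i c = (i c * c) * (c * i c) := f1.symm
    _ = (c * i c) * (i c * c) := hcomm
    _ = i c * c := f2

lemma grp_comm {a : S} (ha : GrpInvertible a) : a * i a = i a * a := by
  obtain ⟨x, hx⟩ := ha
  have hxe : x = i a := ci_inv_unique i h1 h2 hu ⟨hx.2.1, hx.2.2⟩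
  rw [← hxe]; exact hx.1

lemma VH_idem {a : S} (ha : GrpInvertible a) : VH a (i a * a) := by
  have co := grp_comm i h1 h2 hu ha
  have kaa : (i a * a) * a = a := by rw [← co, h1]
  have aka : a * (i a * a) = a := e1 i h1 h2 a
  constructor
  · have first : a * (i a * a) * a = a * a := by rw [aka]
    rw [first]
    exact ⟨⟨Or.inr ⟨a, rfl⟩, Or.inr ⟨a, rfl⟩⟩,
      ⟨Or.inr ⟨i a, (by rw [← mul_assoc, kaa] : i a * (a * a) = a).symm⟩,
       Or.inr ⟨i a, (by rw [mul_assoc, co, aka] : (a * a) * i a = a).symm⟩⟩⟩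
  · have second : (i a * a) * a * (i a * a) = a := by rw [kaa, aka]
    rw [second]
    exact ⟨⟨Or.inr ⟨a, aka.symm⟩, Or.inr ⟨a, kaa.symm⟩⟩,
      ⟨Or.inr ⟨i a, rfl⟩, Or.inr ⟨i a, co.symm⟩⟩⟩

lemma grp_of_green {a x : S} (la : leL a (x*a)) (ra : leR a (a*x))
    (lx : leL x (a*x)) (rx : leR x (x*a)) : GrpInvertible (a*x) := by
  have hA : i a * a = i (x*a) * (x*a) := L_eq i h1 h2 hu la (Or.inr ⟨x, rfl⟩)
  have hB : a * i a = (a*x) * i (a*x) := R_eq i h1 h2 hu ra (Or.inr ⟨x, rfl⟩)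
  have hC : i x * x = i (a*x) * (a*x) := L_eq i h1 h2 hu lx (Or.inr ⟨a, rfl⟩)
  have hD : x * i x = (x*a) * i (x*a) := R_eq i h1 h2 hu rx (Or.inr ⟨a, rfl⟩)
  rw [inv_mul i h1 h2 hu] at hA hB hC hD
  -- hA : i a*a = (i a*i x)*(x*a), hB : a*i a = (a*x)*(i x*i a)
  -- hC : i x*x = (i x*i a)*(a*x), hD : x*i x = (x*a)*(i a*i x)
  have qecomm : (i x * x) * (a * i a) = (a * i a) * (i x * x) :=
    idem_comm i h1 h2 hu (lidem i h1 h2 x) (ridem i h1 h2 a)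
  have relq : i x * x = (i x * i a) * ((i x * x) * (a * x)) := by
    calc i x * x = i x * ((i a * a) * x) := by rw [hC]; simp only [mul_assoc]
      _ = i x * (((i a * i x) * (x * a)) * x) := by rw [hA]
      _ = (i x * i a) * ((i x * x) * (a * x)) := by simp only [mul_assoc]
  have rele : a * i a = (a * x) * ((a * i a) * (i x * i a)) := by
    calc a * i a = a * ((x * i x) * i a) := by rw [hB]; simp only [mul_assoc]
      _ = a * (((x * a) * (i a * i x)) * i a) := by rw [hD]
      _ = (a * x) * ((a * i a) * (i x * i a)) := by simp only [mul_assoc]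
  have w1 : (i x * x) * (i x * i a) = i x * i a := by rw [← mul_assoc, h2]
  have X1 : (a*x) * ((i x * x) * (i x * i a)) = a * i a := by rw [w1, ← hB]
  have X2 : (a*x) * ((i x * x) * (i x * i a)) = (a * i a) * (i x * x) := by
    calc (a*x) * ((i x * x) * (i x * i a))
        = (a*x) * (((i x * i a) * ((i x * x) * (a * x))) * (i x * i a)) := by
          conv_lhs => rw [relq]
      _ = ((a*x) * (i x * i a)) * ((i x * x) * ((a*x) * (i x * i a))) := by
          simp only [mul_assoc]
      _ = (a * i a) * ((i x * x) * (a * i a)) := by rw [← hB]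
      _ = (a * i a) * ((a * i a) * (i x * x)) := by rw [qecomm]
      _ = ((a * i a) * (a * i a)) * (i x * x) := by simp only [mul_assoc]
      _ = (a * i a) * (i x * x) := by rw [ridem i h1 h2 a]
  have key1 : (a * i a) * (i x * x) = a * i a := X2.symm.trans X1
  have w2 : (a * i a) * (a * x) = a * x := mul_rule (h1 a) x
  have Y1 : (i x * i a) * ((a * i a) * (a * x)) = i x * x := by rw [w2, ← hC]
  have Y2 : (i x * i a) * ((a * i a) * (a * x)) = (i x * x) * (a * i a) := by
    calc (i x * i a) * ((a * i a) * (a * x))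
        = (i x * i a) * (((a * x) * ((a * i a) * (i x * i a))) * (a * x)) := by
          conv_lhs => rw [rele]
      _ = ((i x * i a) * (a * x)) * ((a * i a) * ((i x * i a) * (a * x))) := by
          simp only [mul_assoc]
      _ = (i x * x) * ((a * i a) * (i x * x)) := by rw [← hC]
      _ = (i x * x) * ((i x * x) * (a * i a)) := by rw [← qecomm]
      _ = ((i x * x) * (i x * x)) * (a * i a) := by simp only [mul_assoc]
      _ = (i x * x) * (a * i a) := by rw [lidem i h1 h2 x]
  have key2 : (i x * x) * (a * i a) = i x * x := Y2.symm.trans Y1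
  have heq : a * i a = i x * x := by
    calc a * i a = (a * i a) * (i x * x) := key1.symm
      _ = (i x * x) * (a * i a) := qecomm.symm
      _ = i x * x := key2
  refine ⟨i (a*x), ?_, h1 _, h2 _⟩
  rw [inv_mul i h1 h2 hu, ← hB, ← hC]
  exact heq

lemma VH_grp {a x : S} (h : VH a x) :
    GrpInvertible (a*x) ∧ GrpInvertible (x*a) := by
  have la : leL a (x*a) := by
    rcases h.1.2.1 with h' | ⟨w, h'⟩
    · exact Or.inr ⟨a, by simpa only [mul_assoc] using h'⟩
    · exact Or.inr ⟨w*a, by simpa only [mul_assoc] using h'⟩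
  have ra : leR a (a*x) := by
    rcases h.1.2.2 with h' | ⟨w, h'⟩
    · exact Or.inr ⟨a, h'⟩
    · exact Or.inr ⟨a*w, by simpa only [mul_assoc] using h'⟩
  have lx : leL x (a*x) := by
    rcases h.2.2.1 with h' | ⟨w, h'⟩
    · exact Or.inr ⟨x, by simpa only [mul_assoc] using h'⟩
    · exact Or.inr ⟨w*x, by simpa only [mul_assoc] using h'⟩
  have rx : leR x (x*a) := by
    rcases h.2.2.2 with h' | ⟨w, h'⟩
    · exact Or.inr ⟨x, h'⟩
    · exact Or.inr ⟨x*w, by simpa only [mul_assoc] using h'⟩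
  exact ⟨grp_of_green i h1 h2 hu la ra lx rx,
         grp_of_green i h1 h2 hu lx rx la ra⟩

section Compl
variable (hcom : ∀ a b : S, GrpInvertible a → GrpInvertible b → grH (a*b) (b*a))
include hcom

lemma conj {g f : S} (hg : GrpInvertible g) (hf : f*f = f) :
    g*(f*i g) = f*((i g*g)*f) ∧ i g*(f*g) = f*((i g*g)*f) := by
  have hgf := hcom g f hg (idem_grp hf)
  have co := grp_comm i h1 h2 hu hg
  have hR := grH_R i h1 h2 hu hgf
  have hL := grH_L i h1 h2 hu hgf
  rw [inv_mul i h1 h2 hu, inv_mul i h1 h2 hu, ci_inv_idem i h1 h2 hu hf] at hR hL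
  constructor
  · have lhs1 : (g*f)*(f*i g) = g*(f*i g) := by
      simp only [mul_assoc]; rw [mul_rule hf]
    have rhs1 : (f*g)*(i g*f) = f*((i g*g)*f) := by
      rw [mul_assoc, ← mul_assoc g, co]
    exact lhs1.symm.trans (hR.trans rhs1)
  · have lhs2 : (i g*f)*(f*g) = i g*(f*g) := by
      simp only [mul_assoc]; rw [mul_rule hf]
    have rhs2 : (f*i g)*(g*f) = f*((i g*g)*f) := by
      rw [mul_assoc, ← mul_assoc (i g)]
    exact lhs2.symm.trans (hL.symm.trans rhs2)

lemma Hcongr_right {a b : S} (hab : grH a b) (c : S) : grH (a*c) (b*c) := by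
  have hL := grH_L i h1 h2 hu hab
  have hR := grH_R i h1 h2 hu hab
  have hb_eq : a*(i a*b) = b := by rw [← mul_assoc, hR, h1]
  have ib_eq : i b = i (i a*b) * i a := by
    conv_lhs => rw [← hb_eq]
    rw [inv_mul i h1 h2 hu]
  have c1 : (i a*b)*(i b*a) = i a*a := by
    calc (i a*b)*(i b*a) = i a*((b*i b)*a) := by simp only [mul_assoc]
      _ = i a*((a*i a)*a) := by rw [← hR]
      _ = i a*a := by rw [h1]
  have c2 : (i b*a)*(i a*b) = i a*a := by
    calc (i b*a)*(i a*b) = i b*((a*i a)*b) := by simp only [mul_assoc]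
      _ = i b*((b*i b)*b) := by rw [hR]
      _ = i b*b := by rw [h1]
      _ = i a*a := hL.symm
  have hgG : GrpInvertible (i a*b) := by
    refine ⟨i (i a*b), ?_, h1 _, h2 _⟩
    rw [inv_mul i h1 h2 hu, ci_inv_inv i h1 h2 hu]
    exact c1.trans c2.symm
  have kg_eq : i (i a*b) * (i a*b) = i a*a := by
    rw [inv_mul i h1 h2 hu, ci_inv_inv i h1 h2 hu]; exact c2
  have fk_comm : (c*i c)*(i a*a) = (i a*a)*(c*i c) :=
    idem_comm i h1 h2 hu (ridem i h1 h2 c) (lidem i h1 h2 a)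
  have conjR := (conj i h1 h2 hu hcom hgG (ridem i h1 h2 c)).1
  have inner2 : (c*i c)*((i a*a)*(c*i c)) = (i a*a)*(c*i c) := by
    calc (c*i c)*((i a*a)*(c*i c)) = ((c*i c)*(i a*a))*(c*i c) := by
          simp only [mul_assoc]
      _ = ((i a*a)*(c*i c))*(c*i c) := by rw [fk_comm]
      _ = (i a*a)*((c*i c)*(c*i c)) := by simp only [mul_assoc]
      _ = (i a*a)*(c*i c) := by rw [ridem i h1 h2 c]
  have Rmain : (b*c)*(i c*i b) = (a*c)*(i c*i a) := by
    calc (b*c)*(i c*i b)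
        = (a*(i a*b))*((c*i c)*(i (i a*b)*i a)) := by
          rw [hb_eq, ← ib_eq]; simp only [mul_assoc]
      _ = a*(((i a*b)*((c*i c)*i (i a*b)))*i a) := by simp only [mul_assoc]
      _ = a*(((c*i c)*((i (i a*b)*(i a*b))*(c*i c)))*i a) := by rw [conjR]
      _ = a*(((c*i c)*((i a*a)*(c*i c)))*i a) := by rw [kg_eq]
      _ = a*(((i a*a)*(c*i c))*i a) := by rw [inner2]
      _ = (a*c)*(i c*i a) := by simp only [mul_assoc]; rw [r1 i h1 h2]
  have Lmain : i (a*c)*(a*c) = i (b*c)*(b*c) := by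
    rw [inv_mul i h1 h2 hu, inv_mul i h1 h2 hu]
    calc (i c*i a)*(a*c) = i c*((i a*a)*c) := by simp only [mul_assoc]
      _ = i c*((i b*b)*c) := by rw [hL]
      _ = (i c*i b)*(b*c) := by simp only [mul_assoc]
  refine grH_of i h1 h2 hu Lmain ?_
  rw [inv_mul i h1 h2 hu, inv_mul i h1 h2 hu]
  exact Rmain.symm

lemma Hcongr_left {a b : S} (hab : grH a b) (c : S) : grH (c*a) (c*b) := by
  have hL := grH_L i h1 h2 hu hab
  have hR := grH_R i h1 h2 hu hab
  have hb_eq : a*(i a*b) = b := by rw [← mul_assoc, hR, h1]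
  have ib_eq : i b = i (i a*b) * i a := by
    conv_lhs => rw [← hb_eq]
    rw [inv_mul i h1 h2 hu]
  have c1 : (i a*b)*(i b*a) = i a*a := by
    calc (i a*b)*(i b*a) = i a*((b*i b)*a) := by simp only [mul_assoc]
      _ = i a*((a*i a)*a) := by rw [← hR]
      _ = i a*a := by rw [h1]
  have c2 : (i b*a)*(i a*b) = i a*a := by
    calc (i b*a)*(i a*b) = i b*((a*i a)*b) := by simp only [mul_assoc]
      _ = i b*((b*i b)*b) := by rw [hR]
      _ = i b*b := by rw [h1]
      _ = i a*a := hL.symm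
  have hgG : GrpInvertible (i a*b) := by
    refine ⟨i (i a*b), ?_, h1 _, h2 _⟩
    rw [inv_mul i h1 h2 hu, ci_inv_inv i h1 h2 hu]
    exact c1.trans c2.symm
  have kg_eq : i (i a*b) * (i a*b) = i a*a := by
    rw [inv_mul i h1 h2 hu, ci_inv_inv i h1 h2 hu]; exact c2
  have Rmain : (c*a)*i (c*a) = (c*b)*i (c*b) := by
    rw [inv_mul i h1 h2 hu, inv_mul i h1 h2 hu]
    calc (c*a)*(i a*i c) = c*((a*i a)*i c) := by simp only [mul_assoc]
      _ = c*((b*i b)*i c) := by rw [hR]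
      _ = (c*b)*(i b*i c) := by simp only [mul_assoc]
  have comm_af : (a*i a)*(i c*c) = (i c*c)*(a*i a) :=
    idem_comm i h1 h2 hu (ridem i h1 h2 a) (lidem i h1 h2 c)
  have Fidem : (i a*((i c*c)*a))*(i a*((i c*c)*a)) = i a*((i c*c)*a) := by
    calc (i a*((i c*c)*a))*(i a*((i c*c)*a))
        = (i a*(i c*c))*((a*i a)*((i c*c)*a)) := by simp only [mul_assoc]
      _ = (i a*(i c*c))*((i c*c)*((a*i a)*a)) := by rw [swap_rule comm_af]
      _ = (i a*(i c*c))*((i c*c)*a) := by rw [h1]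
      _ = i a*(((i c*c)*(i c*c))*a) := by simp only [mul_assoc]
      _ = i a*((i c*c)*a) := by rw [lidem i h1 h2 c]
  have conjL := (conj i h1 h2 hu hcom hgG Fidem).2
  have kF : (i a*a)*(i a*((i c*c)*a)) = i a*((i c*c)*a) := by
    simp only [mul_assoc]; rw [r2 i h1 h2]
  have Lmain : i b*((i c*c)*b) = i a*((i c*c)*a) := by
    calc i b*((i c*c)*b)
        = (i (i a*b)*i a)*((i c*c)*(a*(i a*b))) := by rw [hb_eq, ← ib_eq]
      _ = i (i a*b)*((i a*((i c*c)*a))*(i a*b)) := by simp only [mul_assoc]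
      _ = (i a*((i c*c)*a))*((i (i a*b)*(i a*b))*(i a*((i c*c)*a))) := conjL
      _ = (i a*((i c*c)*a))*((i a*a)*(i a*((i c*c)*a))) := by rw [kg_eq]
      _ = (i a*((i c*c)*a))*(i a*((i c*c)*a)) := by rw [kF]
      _ = i a*((i c*c)*a) := Fidem
  have Lfull : i (c*a)*(c*a) = i (c*b)*(c*b) := by
    rw [inv_mul i h1 h2 hu, inv_mul i h1 h2 hu]
    calc (i a*i c)*(c*a) = i a*((i c*c)*a) := by simp only [mul_assoc]
      _ = i b*((i c*c)*b) := Lmain.symm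
      _ = (i b*i c)*(c*b) := by simp only [mul_assoc]
  exact grH_of i h1 h2 hu Lfull Rmain

lemma orth {a b x y : S} (hx : VH a x) (hy : VH b y) : VH (a*b) (y*x) := by
  have hby : GrpInvertible (b*y) := (VH_grp i h1 h2 hu hy).1
  have hxa : GrpInvertible (x*a) := (VH_grp i h1 h2 hu hx).2
  have hsw : grH ((b*y)*(x*a)) ((x*a)*(b*y)) := hcom _ _ hby hxa
  constructor
  · have hsw3 : grH (a*(((b*y)*(x*a))*b)) (a*(((x*a)*(b*y))*b)) :=
      Hcongr_left i h1 h2 hu hcom (Hcongr_right i h1 h2 hu hcom hsw b) a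
    have q1 : (a*b)*(y*x)*(a*b) = a*(((b*y)*(x*a))*b) := by simp only [mul_assoc]
    have q2 : a*(((x*a)*(b*y))*b) = (a*x*a)*((b*y)*b) := by simp only [mul_assoc]
    have s3 : grH ((a*x*a)*((b*y)*b)) (a*((b*y)*b)) :=
      Hcongr_right i h1 h2 hu hcom hx.1 ((b*y)*b)
    have s4 : grH (a*((b*y)*b)) (a*b) :=
      Hcongr_left i h1 h2 hu hcom hy.1 a
    rw [q1]
    exact grH_trans hsw3 (grH_trans (q2 ▸ s3) s4)
  · have hsw3 : grH (y*(((x*a)*(b*y))*x)) (y*(((b*y)*(x*a))*x)) :=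
      Hcongr_left i h1 h2 hu hcom
        (Hcongr_right i h1 h2 hu hcom (grH_symm hsw) x) y
    have q1 : (y*x)*(a*b)*(y*x) = y*(((x*a)*(b*y))*x) := by simp only [mul_assoc]
    have q2 : y*(((b*y)*(x*a))*x) = (y*b*y)*((x*a)*x) := by simp only [mul_assoc]
    have s3 : grH ((y*b*y)*((x*a)*x)) (y*((x*a)*x)) :=
      Hcongr_right i h1 h2 hu hcom hy.2 ((x*a)*x)
    have s4 : grH (y*((x*a)*x)) (y*x) :=
      Hcongr_left i h1 h2 hu hcom hx.2 y
    rw [q1]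
    exact grH_trans hsw3 (grH_trans (q2 ▸ s3) s4)

end Compl
end Toolkit

theorem stmt15 :
    ((∀ a : S, ∃ x : S, a = a * x * a) ∧
      (∀ a b : S, GrpInvertible a → GrpInvertible b → grH (a * b) (b * a))) ↔
    (((∀ a : S, ∃ x : S, a = a * x * a) ∧
        (∀ a x y : S, refInv a x → refInv a y → x = y)) ∧
      ((∀ a : S, ∃ x : S, a = a * x * a) ∧
        (∀ a b a' b' : S, VH a a' → VH b b' → VH (a * b) (b' * a')))) := by
  constructor
  · rintro ⟨hreg, hcom⟩
    obtain ⟨i, h1, h2⟩ := make_inv hreg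
    have hu : ∀ a x y : S, refInv a x → refInv a y → x = y :=
      uniq_of_comm (fun e f he hf => hcom_idem_comm hcom he hf)
    exact ⟨⟨hreg, hu⟩,
      ⟨hreg, fun a b a' b' ha hb => orth i h1 h2 hu hcom ha hb⟩⟩
  · rintro ⟨⟨hreg, hu⟩, ⟨-, horth⟩⟩
    obtain ⟨i, h1, h2⟩ := make_inv hreg
    refine ⟨hreg, ?_⟩
    intro a b ha hb
    have coa : a * i a = i a * a := grp_comm i h1 h2 hu ha
    have cob : b * i b = i b * b := grp_comm i h1 h2 hu hb
    have ha' : GrpInvertible (i a) := ⟨a, coa.symm, h2 a, h1 a⟩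
    have hb' : GrpInvertible (i b) := ⟨b, cob.symm, h2 b, h1 b⟩
    have kr_a : ∀ t : S, i a*(a*(a*t)) = a*t := fun t => by
      rw [← mul_assoc, ← mul_assoc, ← coa, h1]
    have kr_a2 : ∀ t : S, a*(i a*(i a*t)) = i a*t := fun t => by
      rw [← mul_assoc, ← mul_assoc, coa, h2]
    have cot_a : ∀ t : S, a*(i a*t) = i a*(a*t) := swap_rule coa
    have cot_b : ∀ t : S, b*(i b*t) = i b*(b*t) := swap_rule cob
    -- EQ2 : from the pair (a, i b)
    have sq1 := (horth a (i b) (i a*a) (i (i b)*i b)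
      (VH_idem i h1 h2 hu ha) (VH_idem i h1 h2 hu hb')).1
    rw [ci_inv_inv i h1 h2 hu b] at sq1
    have key1 : (a*i b)*((b*i b)*(i a*a))*(a*i b) = (a*i b)*(a*i b) := by
      simp only [mul_assoc]
      rw [r2 i h1 h2 b, kr_a]
    rw [key1] at sq1
    have EQ2' := sq_comm i h1 h2 hu sq1
    rw [inv_mul i h1 h2 hu, ci_inv_inv i h1 h2 hu] at EQ2'
    -- EQ2' : (a*i b)*(b*i a) = (b*i a)*(a*i b)
    -- EQ3 : from the pair (i a, b)
    have sq2 := (horth (i a) b (i (i a)*i a) (i b*b)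
      (VH_idem i h1 h2 hu ha') (VH_idem i h1 h2 hu hb)).1
    rw [ci_inv_inv i h1 h2 hu a] at sq2
    have key2 : (i a*b)*((i b*b)*(a*i a))*(i a*b) = (i a*b)*(i a*b) := by
      simp only [mul_assoc]
      rw [r1 i h1 h2 b, kr_a2]
    rw [key2] at sq2
    have EQ3' := sq_comm i h1 h2 hu sq2
    rw [inv_mul i h1 h2 hu, ci_inv_inv i h1 h2 hu] at EQ3'
    -- EQ3' : (i a*b)*(i b*a) = (i b*a)*(i a*b)
    have EQ3'' : i a*(b*(i b*a)) = i b*(a*(i a*b)) := by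
      simpa only [mul_assoc] using EQ3'
    have EQ2t : ∀ t : S, a*(i b*(b*(i a*t))) = b*(i a*(a*(i b*t))) := fun t => by
      have := congrArg (· * t) EQ2'
      simpa only [mul_assoc] using this
    have fkc : (b*i b)*(a*i a) = (a*i a)*(b*i b) :=
      idem_comm i h1 h2 hu (ridem i h1 h2 b) (ridem i h1 h2 a)
    have lkc : (i b*b)*(i a*a) = (i a*a)*(i b*b) :=
      idem_comm i h1 h2 hu (lidem i h1 h2 b) (lidem i h1 h2 a)
    have kaa : i a*(a*a) = a := by rw [← mul_assoc, ← coa, h1]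
    have ibbb : i b*(b*b) = b := by rw [← mul_assoc, ← cob, h1]
    have leg1 : a*b = ((a*b)*(i a*i b))*(b*a) := by
      symm
      simp only [mul_assoc]
      rw [← cot_b a, EQ3'', swap4 fkc b, e1 i h1 h2 b, cot_a b, r1 i h1 h2]
    have leg2 : a*b = (b*a)*((i a*i b)*(a*b)) := by
      symm
      simp only [mul_assoc]
      rw [cot_a, ← EQ2t (a*b), swap4 lkc b, r1 i h1 h2, ibbb]
    have leg3 : b*a = ((b*a)*(i b*i a))*(a*b) := by
      symm
      simp only [mul_assoc]
      rw [← cot_a b, ← EQ3'', swap4 fkc.symm a, e1 i h1 h2 a, cot_b a, r1 i h1 h2]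
    have leg4 : b*a = (a*b)*((i b*i a)*(b*a)) := by
      symm
      simp only [mul_assoc]
      rw [cot_b, EQ2t (b*a), swap4 lkc.symm a, r1 i h1 h2, kaa]
    exact ⟨⟨Or.inr ⟨(a*b)*(i a*i b), leg1⟩, Or.inr ⟨(i a*i b)*(a*b), leg2⟩⟩,
      ⟨Or.inr ⟨(b*a)*(i b*i a), leg3⟩, Or.inr ⟨(i b*i a)*(b*a), leg4⟩⟩⟩
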